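/- arXiv:1504.01796 — 2 statements merged into one kernel-verified Lean document; each statement's English description precedes it below -/
import Mathlib

section
/- Let $(S,\Sigma)$ be a measurable space, $\{\mu^{(n)}\}$ finite measures converging in total variation to a measure $\mu$, $f \in L^1(S;\mu)$, and $f^{(n)} \in L^1(S;\mu^{(n)})$. Suppose (i) for each $\varepsilon>0$, $\mu(\{s: f^{(n)}(s) \le f(s)-\varepsilon\}) \to 0$, and (ii) $\liminf_{K\to+\infty}\inf_{n\ge 1}\int_S f^{(n)}\mathbf{1}\{f^{(n)} \le -K\}\,d\mu^{(n)} \ge 0$. Then $\liminf_{n\to\infty}\inf_{A\in\Sigma}(\int_A f^{(n)}\,d\mu^{(n)} - \int_A f\,d\mu) \ge 0$. -/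
/-!
Truncate `F n` at height `K` on both sides. Below `-K` the integral of `F n` over any set is
bounded below by the one over all of `{F n ≤ -K}`, which is uniformly small by (ii). The truncation
is bounded by `K`, so by the layer-cake formula replacing `μ⁽ⁿ⁾` by `μ` in its integral costs at
most `2K` times the total variation distance. With respect to `μ`, `f` exceeds the truncation by more
than `γ` only where `f > K` (a tail of `f`, small once `K` is large) or on `{F n ≤ f - γ}`, whose
`μ`-measure tends to zero by (i). Measurability is arranged by passing to measurable
modifications, since a `μ⁽ⁿ⁾`-null set has `μ`-measure at most the total variation distance.
-/

open MeasureTheory Filter Topology Set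
open scoped ENNReal

namespace MeasureTheory

variable {S : Type*} [MeasurableSpace S] {μ ν : Measure S}

/-- `sup_A |μ A - ν A|`, with the absolute value written through truncated subtraction. -/
noncomputable def tvDist (μ ν : Measure S) : ℝ≥0∞ :=
  ⨆ (A : Set S) (_ : MeasurableSet A), (μ A - ν A) + (ν A - μ A)

lemma tvDist_comm (μ ν : Measure S) : tvDist μ ν = tvDist ν μ := by
  simp only [tvDist, add_comm]

lemma tvDist_ne_top [IsFiniteMeasure μ] [IsFiniteMeasure ν] : tvDist μ ν ≠ ⊤ :=
  ne_top_of_le_ne_top (ENNReal.add_ne_top.2 ⟨measure_ne_top μ univ, measure_ne_top ν univ⟩) <|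
    iSup₂_le fun A _ => add_le_add (tsub_le_self.trans (measure_mono (subset_univ A)))
      (tsub_le_self.trans (measure_mono (subset_univ A)))

lemma measure_le_add_tvDist {A : Set S} (hA : MeasurableSet A) : μ A ≤ ν A + tvDist μ ν :=
  tsub_le_iff_left.1 <| le_self_add.trans <|
    le_iSup₂ (f := fun A (_ : MeasurableSet A) => (μ A - ν A) + (ν A - μ A)) A hA

lemma measure_le_add_tvDist_of_ae_le {s t : Set S} (hts : t ≤ᵐ[ν] s) :
    μ t ≤ μ s + tvDist μ ν := by
  have hnull : ν (toMeasurable ν (t \ s)) = 0 := by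
    rw [measure_toMeasurable]; exact ae_le_set.1 hts
  calc μ t ≤ μ s + μ (t \ s) := tsub_le_iff_left.1 le_measure_sdiff
    _ ≤ μ s + μ (toMeasurable ν (t \ s)) := by gcongr; exact subset_toMeasurable ν _
    _ ≤ μ s + tvDist μ ν := by
      gcongr
      simpa [hnull] using
        measure_le_add_tvDist (μ := μ) (ν := ν) (measurableSet_toMeasurable ν (t \ s))

lemma isFiniteMeasure_of_tvDist_ne_top [IsFiniteMeasure ν] (h : tvDist μ ν ≠ ⊤) :
    IsFiniteMeasure μ :=
  ⟨(measure_le_add_tvDist MeasurableSet.univ).trans_lt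
    (ENNReal.add_lt_top.2 ⟨measure_lt_top ν univ, h.lt_top⟩)⟩

lemma tvDist_restrict_le {A : Set S} (hA : MeasurableSet A) :
    tvDist (μ.restrict A) (ν.restrict A) ≤ tvDist μ ν :=
  iSup₂_le fun B hB => by
    simp only [Measure.restrict_apply hB]
    exact le_iSup₂ (f := fun A (_ : MeasurableSet A) => (μ A - ν A) + (ν A - μ A))
      (B ∩ A) (hB.inter hA)

lemma tendsto_measure_of_ae_le {ι : Type*} {l : Filter ι} {μs : ι → Measure S} {s t : ι → Set S}
    (htv : Tendsto (fun i => tvDist μ (μs i)) l (𝓝 0)) (hts : ∀ i, t i ≤ᵐ[μs i] s i)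
    (hs : Tendsto (fun i => μ (s i)) l (𝓝 0)) : Tendsto (fun i => μ (t i)) l (𝓝 0) :=
  tendsto_of_tendsto_of_tendsto_of_le_of_le tendsto_const_nhds (by simpa using hs.add htv)
    (fun _ => bot_le) fun i => measure_le_add_tvDist_of_ae_le (hts i)

/-- Layer cake: integrate the level-set bound `μ {g > t} ≤ ν {g > t} + θ` over `t ∈ (0, M]`. -/
lemma lintegral_le_lintegral_add_of_measure_le_add {θ : ℝ≥0∞}
    (h : ∀ A, MeasurableSet A → μ A ≤ ν A + θ) {g : S → ℝ} (hg : Measurable g) (hg0 : 0 ≤ g)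
    {M : ℝ} (hgM : ∀ x, g x ≤ M) :
    ∫⁻ x, ENNReal.ofReal (g x) ∂μ ≤ ∫⁻ x, ENNReal.ofReal (g x) ∂ν + θ * ENNReal.ofReal M := by
  rw [lintegral_eq_lintegral_meas_lt μ (ae_of_all _ hg0) hg.aemeasurable,
    lintegral_eq_lintegral_meas_lt ν (ae_of_all _ hg0) hg.aemeasurable]
  have hlevel : ∀ t, μ {x | t < g x} ≤ ν {x | t < g x} + (Iic M).indicator (fun _ => θ) t := by
    intro t
    by_cases ht : t ≤ M
    · rw [indicator_of_mem (mem_Iic.2 ht)]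
      exact h _ (measurableSet_lt measurable_const hg)
    · have hempty : {x | t < g x} = ∅ :=
        eq_empty_of_forall_notMem fun x hx => ht (le_of_lt (lt_of_lt_of_le hx (hgM x)))
      simp [hempty]
  calc ∫⁻ t in Ioi 0, μ {x | t < g x}
      ≤ ∫⁻ t in Ioi 0, (ν {x | t < g x} + (Iic M).indicator (fun _ => θ) t) :=
        lintegral_mono hlevel
    _ = (∫⁻ t in Ioi 0, ν {x | t < g x}) + θ * ENNReal.ofReal M := by
      rw [lintegral_add_right _ (measurable_const.indicator measurableSet_Iic),
        lintegral_indicator_const measurableSet_Iic, Measure.restrict_apply measurableSet_Iic,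
        Iic_inter_Ioi, Real.volume_Ioc, sub_zero]

lemma integral_le_integral_add_of_measure_le_add [IsFiniteMeasure ν] {θ : ℝ≥0∞} (hθ : θ ≠ ⊤)
    (h : ∀ A, MeasurableSet A → μ A ≤ ν A + θ) {g : S → ℝ} (hg : Measurable g) (hg0 : 0 ≤ g)
    {M : ℝ} (hM : 0 ≤ M) (hgM : ∀ x, g x ≤ M) :
    ∫ x, g x ∂μ ≤ ∫ x, g x ∂ν + θ.toReal * M := by
  have hν : ∫⁻ x, ENNReal.ofReal (g x) ∂ν ≠ ⊤ :=
    (Integrable.of_bound hg.aestronglyMeasurable M (ae_of_all _ fun x => by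
      rw [Real.norm_of_nonneg (hg0 x)]; exact hgM x)).lintegral_lt_top.ne
  have hθM : θ * ENNReal.ofReal M ≠ ⊤ := ENNReal.mul_ne_top hθ ENNReal.ofReal_ne_top
  rw [integral_eq_lintegral_of_nonneg_ae (ae_of_all _ hg0) hg.aestronglyMeasurable,
    integral_eq_lintegral_of_nonneg_ae (ae_of_all _ hg0) hg.aestronglyMeasurable]
  calc (∫⁻ x, ENNReal.ofReal (g x) ∂μ).toReal
      ≤ (∫⁻ x, ENNReal.ofReal (g x) ∂ν + θ * ENNReal.ofReal M).toReal :=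
        ENNReal.toReal_mono (ENNReal.add_ne_top.2 ⟨hν, hθM⟩)
          (lintegral_le_lintegral_add_of_measure_le_add h hg hg0 hgM)
    _ = _ := by rw [ENNReal.toReal_add hν hθM, ENNReal.toReal_mul, ENNReal.toReal_ofReal hM]

lemma integral_sub_integral_le_of_abs_le [IsFiniteMeasure μ] [IsFiniteMeasure ν] {h : S → ℝ}
    (hh : Measurable h) {K : ℝ} (hK : 0 ≤ K) (hhK : ∀ x, |h x| ≤ K) :
    ∫ x, h x ∂μ - ∫ x, h x ∂ν ≤ 2 * K * (tvDist μ ν).toReal := by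
  have hsplit : ∀ (ρ : Measure S) [IsFiniteMeasure ρ],
      ∫ x, h x ∂ρ = ∫ x, max (h x) 0 ∂ρ - ∫ x, max (-h x) 0 ∂ρ := by
    intro ρ _
    have hint : Integrable h ρ := Integrable.of_bound hh.aestronglyMeasurable K
      (ae_of_all _ fun x => (Real.norm_eq_abs _).trans_le (hhK x))
    calc ∫ x, h x ∂ρ = ∫ x, (max (h x) 0 - max (-h x) 0) ∂ρ := by simp_rw [max_zero_sub_eq_self]
      _ = _ := integral_sub hint.pos_part hint.neg.pos_part
  have hpos := integral_le_integral_add_of_measure_le_add (g := fun x => max (h x) 0)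
    (tvDist_ne_top (μ := μ) (ν := ν))
    (fun _ hA => measure_le_add_tvDist (ν := ν) hA) (hh.max measurable_const)
    (fun x => le_max_right _ _) hK (fun x => max_le ((le_abs_self _).trans (hhK x)) hK)
  have hneg := integral_le_integral_add_of_measure_le_add (g := fun x => max (-h x) 0)
    (tvDist_ne_top (μ := ν) (ν := μ))
    (fun _ hA => measure_le_add_tvDist (μ := ν) (ν := μ) hA) (hh.neg.max measurable_const)
    (fun x => le_max_right _ _) hK (fun x => max_le ((neg_le_abs _).trans (hhK x)) hK)
  rw [tvDist_comm] at hneg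
  rw [hsplit μ, hsplit ν]
  linarith

lemma abs_max_min_neg_le {K : ℝ} (hK : 0 ≤ K) (y : ℝ) : |max (min y K) (-K)| ≤ K :=
  abs_le.2 ⟨le_max_right _ _, max_le (min_le_right _ _) (by linarith)⟩

lemma integrable_max_min_neg [IsFiniteMeasure μ] {F : S → ℝ} (hF : Measurable F) {K : ℝ}
    (hK : 0 ≤ K) : Integrable (fun x => max (min (F x) K) (-K)) μ :=
  Integrable.of_bound ((hF.min measurable_const).max measurable_const).aestronglyMeasurable K
    (ae_of_all _ fun _ => (Real.norm_eq_abs _).trans_le (abs_max_min_neg_le hK _))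

lemma setIntegral_max_min_neg_add_le [IsFiniteMeasure ν] {F : S → ℝ} (hFm : Measurable F)
    (hF : Integrable F ν) {K : ℝ} (hK : 0 ≤ K) {A : Set S} (hA : MeasurableSet A) :
    ∫ x in A, max (min (F x) K) (-K) ∂ν + ∫ x in {x | F x ≤ -K}, F x ∂ν ≤ ∫ x in A, F x ∂ν := by
  set T := {x | F x ≤ -K}
  have hT : MeasurableSet T := measurableSet_le hFm measurable_const
  have hTF : Integrable (T.indicator F) ν := hF.indicator hT
  have hTnonpos : ∀ x, T.indicator F x ≤ 0 :=
    indicator_nonpos fun x hx => (show F x ≤ -K from hx).trans (by linarith)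
  have htrunc := integrable_max_min_neg (μ := ν) hFm hK
  have hpointwise : ∀ x, max (min (F x) K) (-K) + T.indicator F x ≤ F x := by
    intro x
    by_cases hx : F x ≤ -K
    · rw [indicator_of_mem (show x ∈ T from hx), max_eq_right ((min_le_left _ _).trans hx)]
      linarith
    · rw [indicator_of_notMem (show x ∉ T from hx), add_zero]
      exact max_le (min_le_left _ _) (not_le.1 hx).le
  calc ∫ x in A, max (min (F x) K) (-K) ∂ν + ∫ x in T, F x ∂ν
      = ∫ x in A, max (min (F x) K) (-K) ∂ν + (∫ x in A, T.indicator F x ∂ν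
          + ∫ x in Aᶜ, T.indicator F x ∂ν) := by
        rw [integral_add_compl hA hTF, integral_indicator hT]
    _ ≤ ∫ x in A, max (min (F x) K) (-K) ∂ν + ∫ x in A, T.indicator F x ∂ν := by
        linarith [setIntegral_nonpos (μ := ν) hA.compl fun x _ => hTnonpos x]
    _ = ∫ x in A, (max (min (F x) K) (-K) + T.indicator F x) ∂ν :=
        (integral_add htrunc.integrableOn hTF.integrableOn).symm
    _ ≤ ∫ x in A, F x ∂ν :=
        setIntegral_mono (htrunc.add hTF).integrableOn hF.integrableOn hpointwise

lemma setIntegral_sub_setIntegral_max_min_neg_le [IsFiniteMeasure μ] {f F : S → ℝ}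
    (hfm : Measurable f) (hf : Integrable f μ) (hFm : Measurable F) {K γ : ℝ} (hK : 0 ≤ K)
    (hγ : 0 ≤ γ) (A : Set S) :
    ∫ x in A, f x ∂μ - ∫ x in A, max (min (F x) K) (-K) ∂μ ≤
      γ * μ.real univ + ∫ x, max (f x - K) 0 ∂μ + ∫ x in {x | F x ≤ f x - γ}, (K + |f x|) ∂μ := by
  set D := {x | F x ≤ f x - γ}
  have hD : MeasurableSet D := measurableSet_le hFm (hfm.sub measurable_const)
  set E := fun x => γ + max (f x - K) 0 + D.indicator (fun x => K + |f x|) x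
  have htail : Integrable (fun x => max (f x - K) 0) μ := (hf.sub (integrable_const K)).pos_part
  have hbad : Integrable (D.indicator fun x => K + |f x|) μ :=
    ((integrable_const K).add hf.abs).indicator hD
  have hE : Integrable E μ := ((integrable_const γ).add htail).add hbad
  have hE0 : ∀ x, 0 ≤ E x := fun x => by
    have : 0 ≤ D.indicator (fun x => K + |f x|) x :=
      indicator_nonneg (fun x _ => by positivity) x
    have := le_max_right (f x - K) 0
    simp only [E]
    linarith
  have hfE : ∀ x, f x - max (min (F x) K) (-K) ≤ E x := by
    intro x
    have hlow : -K ≤ max (min (F x) K) (-K) := le_max_right _ _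
    have htail_nonneg := le_max_right (f x - K) 0
    by_cases hx : x ∈ D
    · simp only [E, indicator_of_mem hx]
      linarith [le_abs_self (f x)]
    · have hgood : min (f x - γ) K ≤ max (min (F x) K) (-K) :=
        (min_le_min_right K (not_le.1 hx).le).trans (le_max_left _ _)
      simp only [E, indicator_of_notMem hx]
      rcases le_total (f x - γ) K with h | h
      · rw [min_eq_left h] at hgood
        linarith
      · rw [min_eq_right h] at hgood
        linarith [le_max_left (f x - K) 0]
  calc ∫ x in A, f x ∂μ - ∫ x in A, max (min (F x) K) (-K) ∂μ
      = ∫ x in A, (f x - max (min (F x) K) (-K)) ∂μ :=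
        (integral_sub hf.integrableOn (integrable_max_min_neg hFm hK).integrableOn).symm
    _ ≤ ∫ x in A, E x ∂μ :=
        setIntegral_mono (hf.sub (integrable_max_min_neg hFm hK)).integrableOn hE.integrableOn hfE
    _ ≤ ∫ x, E x ∂μ := setIntegral_le_integral hE (ae_of_all _ hE0)
    _ = _ := by
        simp only [E]
        rw [integral_add (f := fun x => γ + max (f x - K) 0) ((integrable_const γ).add htail) hbad,
          integral_add (integrable_const γ) htail, integral_const, integral_indicator hD,
          smul_eq_mul, mul_comm]

lemma setIntegral_le_setIntegral_add_truncation_error [IsFiniteMeasure μ] [IsFiniteMeasure ν]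
    {f F : S → ℝ} (hfm : Measurable f) (hf : Integrable f μ) (hFm : Measurable F) (hF : Integrable F ν)
    {K γ : ℝ} (hK : 0 ≤ K) (hγ : 0 ≤ γ) {A : Set S} (hA : MeasurableSet A) :
    ∫ x in A, f x ∂μ ≤ ∫ x in A, F x ∂ν - ∫ x in {x | F x ≤ -K}, F x ∂ν
      + 2 * K * (tvDist μ ν).toReal + γ * μ.real univ + ∫ x, max (f x - K) 0 ∂μ
      + ∫ x in {x | F x ≤ f x - γ}, (K + |f x|) ∂μ := by
  have htrunc := setIntegral_max_min_neg_add_le hFm hF hK hA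
  have htransfer := integral_sub_integral_le_of_abs_le (μ := μ.restrict A) (ν := ν.restrict A)
    ((hFm.min measurable_const).max measurable_const) hK (fun x => abs_max_min_neg_le hK (F x))
  have hrestrict : (tvDist (μ.restrict A) (ν.restrict A)).toReal ≤ (tvDist μ ν).toReal :=
    ENNReal.toReal_mono tvDist_ne_top (tvDist_restrict_le hA)
  have herror := setIntegral_sub_setIntegral_max_min_neg_le hfm hf hFm hK hγ A
  linarith [mul_le_mul_of_nonneg_left hrestrict (by positivity : (0 : ℝ) ≤ 2 * K)]

lemma tendsto_integral_max_sub_atTop {f : S → ℝ} (hf : Integrable f μ) :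
    Tendsto (fun K : ℝ => ∫ x, max (f x - K) 0 ∂μ) atTop (𝓝 0) := by
  have hbound : ∀ᶠ K : ℝ in atTop, ∀ᵐ x ∂μ, ‖max (f x - K) 0‖ ≤ |f x| := by
    filter_upwards [eventually_ge_atTop 0] with K hK
    refine ae_of_all _ fun x => ?_
    rw [Real.norm_of_nonneg (le_max_right _ _)]
    exact max_le (by linarith [le_abs_self (f x)]) (abs_nonneg _)
  have hlim : ∀ x, Tendsto (fun K : ℝ => max (f x - K) 0) atTop (𝓝 0) := fun x =>
    tendsto_const_nhds.congr' <| by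
      filter_upwards [eventually_ge_atTop (f x)] with K hK
      exact (max_eq_right (by linarith)).symm
  simpa using tendsto_integral_filter_of_dominated_convergence (fun x => |f x|)
    (Eventually.of_forall fun K =>
      ((hf.aemeasurable.sub_const K).max aemeasurable_const).aestronglyMeasurable) hbound hf.abs
    (ae_of_all _ hlim)

lemma setOf_le_ae_eq {F F' G G' : S → ℝ} (hF : F =ᵐ[μ] F') (hG : G =ᵐ[μ] G') :
    {x | F x ≤ G x} =ᵐ[μ] {x | F' x ≤ G' x} := by
  filter_upwards [hF, hG] with x hFx hGx
  show (F x ≤ G x) = (F' x ≤ G' x)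
  rw [hFx, hGx]

/-- `c ≤ 0` is needed: for a non-measurable `A` the inner infimum is `⨅ _ : False, _ = 0`. -/
lemma le_iInf_measurableSet {c : ℝ} (hc : c ≤ 0) {φ : Set S → ℝ}
    (h : ∀ A, MeasurableSet A → c ≤ φ A) : c ≤ ⨅ (A : Set S) (_ : MeasurableSet A), φ A :=
  le_ciInf fun A => by
    by_cases hA : MeasurableSet A
    · rw [ciInf_pos hA]
      exact h A hA
    · simpa [hA] using hc

theorem uniform_fatou_of_measurable {μs : ℕ → Measure S} [IsFiniteMeasure μ]
    [∀ n, IsFiniteMeasure (μs n)] (htv : Tendsto (fun n => tvDist μ (μs n)) atTop (𝓝 0))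
    {f : S → ℝ} {F : ℕ → S → ℝ} (hfm : Measurable f) (hf : Integrable f μ)
    (hFm : ∀ n, Measurable (F n)) (hF : ∀ n, Integrable (F n) (μs n))
    (hi : ∀ γ : ℝ, 0 < γ → Tendsto (fun n => μ {x | F n x ≤ f x - γ}) atTop (𝓝 0))
    (hii : ∀ ε : ℝ, 0 < ε → ∃ K₀ : ℝ, ∀ K ≥ K₀, ∀ n,
      -ε ≤ ∫ x in {x | F n x ≤ -K}, F n x ∂(μs n))
    {ε : ℝ} (hε : 0 < ε) :
    ∀ᶠ n in atTop, ∀ A, MeasurableSet A → ∫ x in A, f x ∂μ - ε ≤ ∫ x in A, F n x ∂(μs n) := by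
  have hε4 : 0 < ε / 4 := by positivity
  obtain ⟨K₀, hK₀⟩ := hii (ε / 4) hε4
  set γ := ε / 4 / (μ.real univ + 1)
  have hγ : 0 < γ := by positivity
  have hγμ : γ * μ.real univ ≤ ε / 4 := by
    rw [div_mul_eq_mul_div, div_le_iff₀ (by positivity)]
    nlinarith [measureReal_nonneg (μ := μ) (s := univ)]
  obtain ⟨K, hKK₀, hK, htail⟩ := ((eventually_ge_atTop K₀).and ((eventually_ge_atTop 0).and
    ((tendsto_integral_max_sub_atTop hf).eventually_lt_const hε4))).exists
  have herr : Tendsto (fun n => 2 * K * (tvDist μ (μs n)).toReal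
      + ∫ x in {x | F n x ≤ f x - γ}, (K + |f x|) ∂μ) atTop (𝓝 0) := by
    have htv' := ((ENNReal.tendsto_toReal ENNReal.zero_ne_top).comp htv).const_mul (2 * K)
    have hbad := ((integrable_const K).add hf.abs).tendsto_setIntegral_nhds_zero (hi γ hγ)
    simpa using htv'.add hbad
  filter_upwards [herr.eventually_lt_const hε4] with n hn A hA
  have := setIntegral_le_setIntegral_add_truncation_error hfm hf (hFm n) (hF n) hK hγ.le hA
  linarith [hK₀ K hKK₀ n]

end MeasureTheory

/-- Conditions (i) and (ii) imply the uniform Fatou inequality (1.1) for finite measures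
converging in total variation. -/
theorem uniform_fatou_stmt4 {S : Type*} [MeasurableSpace S]
    (μs : ℕ → Measure S) (μ : Measure S) [∀ n, IsFiniteMeasure (μs n)]
    (htv : Tendsto (fun n => ⨆ (A : Set S) (_ : MeasurableSet A),
      (μs n A - μ A) + (μ A - μs n A)) atTop (𝓝 0))
    (f : S → ℝ) (F : ℕ → S → ℝ)
    (hf : Integrable f μ) (hF : ∀ n, Integrable (F n) (μs n))
    (hi : ∀ ε : ℝ, 0 < ε →
      Tendsto (fun n => μ {s | F n s ≤ f s - ε}) atTop (𝓝 0))
    (hii : ∀ ε : ℝ, 0 < ε → ∃ K₀ : ℝ, ∀ K ≥ K₀, ∀ n,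
      -ε ≤ ∫ s in {x | F n x ≤ -K}, F n s ∂(μs n)) :
    ∀ ε : ℝ, 0 < ε → ∀ᶠ n in atTop,
      -ε ≤ ⨅ (A : Set S) (_ : MeasurableSet A),
        (∫ s in A, F n s ∂(μs n) - ∫ s in A, f s ∂μ) := by
  have htv' : Tendsto (fun n => tvDist μ (μs n)) atTop (𝓝 0) :=
    htv.congr fun n => tvDist_comm (μs n) μ
  obtain ⟨n₀, hn₀⟩ := (htv'.eventually_lt_const zero_lt_one).exists
  have : IsFiniteMeasure μ := isFiniteMeasure_of_tvDist_ne_top (hn₀.trans ENNReal.one_lt_top).ne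
  set f' := hf.aestronglyMeasurable.mk f
  set F' := fun n => (hF n).aestronglyMeasurable.mk (F n)
  have hff' : f =ᵐ[μ] f' := hf.aestronglyMeasurable.ae_eq_mk
  have hFF' : ∀ n, F n =ᵐ[μs n] F' n := fun n => (hF n).aestronglyMeasurable.ae_eq_mk
  have hi' : ∀ γ : ℝ, 0 < γ → Tendsto (fun n => μ {x | F' n x ≤ f' x - γ}) atTop (𝓝 0) :=
    fun γ hγ => tendsto_measure_of_ae_le htv'
      (fun n => (setOf_le_ae_eq (hFF' n).symm EventuallyEq.rfl).le)
      ((hi γ hγ).congr fun n => measure_congr <|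
        setOf_le_ae_eq EventuallyEq.rfl (hff'.sub (EventuallyEq.refl _ fun _ => γ)))
  have hii' : ∀ ε : ℝ, 0 < ε → ∃ K₀ : ℝ, ∀ K ≥ K₀, ∀ n,
      -ε ≤ ∫ x in {x | F' n x ≤ -K}, F' n x ∂(μs n) := by
    refine fun ε hε => (hii ε hε).imp fun K₀ hK₀ K hK n => ?_
    rw [← setIntegral_congr_set (setOf_le_ae_eq (hFF' n) EventuallyEq.rfl),
      ← integral_congr_ae (ae_restrict_of_ae (hFF' n))]
    exact hK₀ K hK n
  intro ε hε
  filter_upwards [uniform_fatou_of_measurable htv'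
    hf.aestronglyMeasurable.stronglyMeasurable_mk.measurable (hf.congr hff') (fun n => (hF n).aestronglyMeasurable.stronglyMeasurable_mk.measurable)
    (fun n => (hF n).congr (hFF' n)) hi' hii' hε] with n hn
  refine le_iInf_measurableSet (by linarith) fun A hA => ?_
  rw [integral_congr_ae (ae_restrict_of_ae (hFF' n)), integral_congr_ae (ae_restrict_of_ae hff')]
  linarith [hn A hA]
end

section
/- Let $(S,\Sigma)$ be a measurable space, $\mu$ a finite measure, and $f, f^{(n)} \in L^1(S;\mu)$. Then $\liminf_{n\to\infty}\inf_{A\in\Sigma}(\int_A f^{(n)}\,d\mu - \int_A f\,d\mu) \ge 0$ if and only if (i) for each $\varepsilon>0$, $\mu(\{s: f^{(n)}(s) \le f(s)-\varepsilon\}) \to 0$, and (ii) $\liminf_{K\to+\infty}\inf_{n\ge1}\int_S f^{(n)}\mathbf{1}\{f^{(n)} \le -K\}\,d\mu \ge 0$. -/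
open MeasureTheory Filter Topology

/-! The infimum of `∫_A (F n - f)` over measurable `A` is attained at `A = {F n < f}`, where it
equals `-∫ (f - F n)⁺`; so the left-hand side says that the shortfall `(f - F n)⁺` tends to `0`
in `L¹`. Markov's inequality turns this into (i). For (ii), on `{F n ≤ -K}` the function `-F n` is
at most `2 (f - F n)⁺` plus twice the part of `|f|` above `K / 2`, which handles all but finitely
many `n`, and a single integrable function has vanishing tails. Conversely, splitting according to
whether `F n ≤ f - δ` and whether `F n ≤ -K` bounds `∫ (f - F n)⁺` by `δ μ(S)`, the integral of
`|f| + K` over the set `{F n ≤ f - δ}` of small measure, and the tail controlled by (ii). -/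

lemma tendsto_nhds_zero_iff_forall_eventually_le {ι : Type*} {l : Filter ι} {u : ι → ℝ}
    (hu : ∀ i, 0 ≤ u i) : Tendsto u l (𝓝 0) ↔ ∀ ε > 0, ∀ᶠ i in l, u i ≤ ε := by
  refine ⟨fun h ε hε => h.eventually (eventually_le_nhds hε), fun h => ?_⟩
  refine tendsto_order.2 ⟨fun a ha => .of_forall fun i => ha.trans_le (hu i), fun a ha => ?_⟩
  exact (h (a / 2) (half_pos ha)).mono fun i hi => hi.trans_lt (half_lt_self ha)

namespace MeasureTheory

variable {S : Type*} [MeasurableSpace S] {μ : Measure S}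

theorem iInf_setIntegral_eq_neg_integral_max_neg {g : S → ℝ} (hg : Integrable g μ) :
    ⨅ (A : Set S) (_ : MeasurableSet A), ∫ x in A, g x ∂μ = -∫ x, max (-g x) 0 ∂μ := by
  have lower (A : Set S) :
      -∫ x, max (-g x) 0 ∂μ ≤ ⨅ (_ : MeasurableSet A), ∫ x in A, g x ∂μ := by
    by_cases hA : MeasurableSet A
    · rw [ciInf_pos hA]
      calc -∫ x, max (-g x) 0 ∂μ ≤ -∫ x in A, max (-g x) 0 ∂μ :=
            neg_le_neg (setIntegral_le_integral hg.neg_part (.of_forall fun _ => le_max_right _ _))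
        _ = ∫ x in A, -max (-g x) 0 ∂μ := (integral_neg _).symm
        _ ≤ ∫ x in A, g x ∂μ :=
            setIntegral_mono hg.neg_part.neg.integrableOn hg.integrableOn fun x => by
              linarith [le_max_left (-g x) 0]
    · -- for non-measurable `A` the inner infimum is the junk value `sInf ∅ = 0`
      rw [ciInf_neg hA, Real.sInf_empty, neg_nonpos]
      exact integral_nonneg fun _ => le_max_right _ _
  have hneg : NullMeasurableSet {x | g x < 0} μ :=
    nullMeasurableSet_lt hg.aemeasurable aemeasurable_const
  have attained : ∫ x in toMeasurable μ {x | g x < 0}, g x ∂μ = -∫ x, max (-g x) 0 ∂μ := by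
    rw [Measure.restrict_congr_set hneg.toMeasurable_ae_eq, ← integral_indicator₀ hneg,
      ← integral_neg]
    congr 1 with x
    by_cases hx : g x < 0
    · simp [hx, max_eq_left (neg_nonneg.2 hx.le)]
    · simp [hx, max_eq_right (neg_nonpos.2 (not_lt.1 hx))]
  refine le_antisymm ?_ (le_ciInf lower)
  calc _ ≤ ⨅ (_ : MeasurableSet (toMeasurable μ {x | g x < 0})),
        ∫ x in toMeasurable μ {x | g x < 0}, g x ∂μ := ciInf_le ⟨_, Set.forall_mem_range.2 lower⟩ _
    _ = _ := by rw [ciInf_pos (measurableSet_toMeasurable _ _), attained]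

theorem meas_ge_le_ofReal_integral_div {g : S → ℝ} (hg : Integrable g μ) (hg₀ : 0 ≤ᵐ[μ] g)
    {ε : ℝ} (hε : 0 < ε) : μ {x | ε ≤ g x} ≤ ENNReal.ofReal ((∫ x, g x ∂μ) / ε) :=
  calc μ {x | ε ≤ g x} ≤ μ {x | ENNReal.ofReal ε ≤ ENNReal.ofReal (g x)} :=
        measure_mono fun _ hx => ENNReal.ofReal_le_ofReal hx
    _ ≤ (∫⁻ x, ENNReal.ofReal (g x) ∂μ) / ENNReal.ofReal ε :=
        meas_ge_le_lintegral_div hg.aemeasurable.ennreal_ofReal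
          (ENNReal.ofReal_pos.2 hε).ne' ENNReal.ofReal_ne_top
    _ = ENNReal.ofReal ((∫ x, g x ∂μ) / ε) := by
        rw [← ofReal_integral_eq_lintegral_ofReal hg hg₀, ENNReal.ofReal_div_of_pos hε]

theorem Integrable.tendsto_setIntegral_setOf_le_neg {g : S → ℝ} (hg : Integrable g μ) :
    Tendsto (fun K : ℝ => ∫ x in {x | g x ≤ -K}, g x ∂μ) atTop (𝓝 0) := by
  refine hg.tendsto_setIntegral_nhds_zero ?_
  have markov : ∀ᶠ K in atTop,
      μ {x | g x ≤ -K} ≤ ENNReal.ofReal ((∫ x, |g x| ∂μ) / K) := by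
    filter_upwards [eventually_gt_atTop 0] with K hK
    refine (measure_mono fun x (hx : g x ≤ -K) => ?_).trans
      (meas_ge_le_ofReal_integral_div hg.abs (.of_forall fun x => abs_nonneg _) hK)
    exact le_abs.2 (Or.inr (le_neg_of_le_neg hx))
  have bound_lim : Tendsto (fun K => ENNReal.ofReal ((∫ x, |g x| ∂μ) / K)) atTop (𝓝 0) := by
    simpa using ENNReal.tendsto_ofReal (tendsto_const_nhds.div_atTop tendsto_id)
  exact tendsto_of_tendsto_of_tendsto_of_le_of_le' tendsto_const_nhds bound_lim
    (.of_forall fun _ => zero_le) markov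

theorem le_setIntegral_setOf_le_neg {f F : S → ℝ}
    (hf : Integrable f μ) (hF : Integrable F μ) {K : ℝ} (hK : 0 ≤ K) :
    2 * ∫ x in {x | -|f x| ≤ -(K / 2)}, -|f x| ∂μ - 2 * ∫ x, max (f x - F x) 0 ∂μ ≤
      ∫ x in {x | F x ≤ -K}, F x ∂μ := by
  have hA : NullMeasurableSet {x | -|f x| ≤ -(K / 2)} μ :=
    nullMeasurableSet_le hf.abs.neg.aemeasurable aemeasurable_const
  have hB : NullMeasurableSet {x | F x ≤ -K} μ :=
    nullMeasurableSet_le hF.aemeasurable aemeasurable_const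
  have hP : Integrable (fun x => 2 * max (f x - F x) 0) μ := (hf.sub hF).pos_part.const_mul 2
  have hfA : Integrable (fun x => 2 * {x | -|f x| ≤ -(K / 2)}.indicator (fun x => -|f x|) x) μ :=
    (hf.abs.neg.indicator₀ hA).const_mul 2
  rw [← integral_indicator₀ hA, ← integral_indicator₀ hB, ← integral_const_mul,
    ← integral_const_mul, ← integral_sub hfA hP]
  refine integral_mono (hfA.sub hP) (hF.indicator₀ hB) fun x => ?_
  simp only [Set.indicator_apply, Set.mem_ofPred_eq]
  split_ifs <;> linarith [le_max_left (f x - F x) 0, le_max_right (f x - F x) 0, neg_abs_le (f x),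
    neg_le_abs (f x)]

theorem integral_max_sub_le [IsFiniteMeasure μ] {f F : S → ℝ} (hf : Integrable f μ)
    (hF : Integrable F μ) {δ K : ℝ} (hδ : 0 ≤ δ) (hK : 0 ≤ K) :
    ∫ x, max (f x - F x) 0 ∂μ ≤ δ * μ.real Set.univ + ∫ x in {x | F x ≤ f x - δ}, (|f x| + K) ∂μ
      - ∫ x in {x | F x ≤ -K}, F x ∂μ := by
  have hA : NullMeasurableSet {x | F x ≤ f x - δ} μ :=
    nullMeasurableSet_le hF.aemeasurable (hf.aemeasurable.sub_const δ)
  have hB : NullMeasurableSet {x | F x ≤ -K} μ :=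
    nullMeasurableSet_le hF.aemeasurable aemeasurable_const
  have hP : Integrable (fun x => max (f x - F x) 0) μ := (hf.sub hF).pos_part
  have hfK : Integrable ({x | F x ≤ f x - δ}.indicator fun x => |f x| + K) μ :=
    (hf.abs.add (integrable_const K)).indicator₀ hA
  have hδfK : Integrable (fun x => δ + {x | F x ≤ f x - δ}.indicator (fun x => |f x| + K) x) μ :=
    (integrable_const δ).add hfK
  rw [← integral_indicator₀ hA, ← integral_indicator₀ hB]
  calc ∫ x, max (f x - F x) 0 ∂μ
      ≤ ∫ x, (δ + {x | F x ≤ f x - δ}.indicator (fun x => |f x| + K) x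
          - {x | F x ≤ -K}.indicator F x) ∂μ := by
        refine integral_mono hP (hδfK.sub (hF.indicator₀ hB)) fun x => ?_
        simp only [Set.indicator_apply, Set.mem_ofPred_eq]
        split_ifs <;> refine max_le ?_ ?_ <;> linarith [le_abs_self (f x), abs_nonneg (f x)]
    _ = _ := by
        rw [integral_sub hδfK (hF.indicator₀ hB), integral_add (integrable_const δ) hfK,
          integral_const, smul_eq_mul, mul_comm]

theorem tendsto_measure_setOf_le_sub_of_tendsto_integral_max_sub {f : S → ℝ} {F : ℕ → S → ℝ}
    (hf : Integrable f μ) (hF : ∀ n, Integrable (F n) μ)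
    (h : Tendsto (fun n => ∫ x, max (f x - F n x) 0 ∂μ) atTop (𝓝 0)) {ε : ℝ} (hε : 0 < ε) :
    Tendsto (fun n => μ {x | F n x ≤ f x - ε}) atTop (𝓝 0) := by
  have markov (n : ℕ) :
      μ {x | F n x ≤ f x - ε} ≤ ENNReal.ofReal ((∫ x, max (f x - F n x) 0 ∂μ) / ε) := by
    have hP : Integrable (fun x => max (f x - F n x) 0) μ := (hf.sub (hF n)).pos_part
    refine (measure_mono fun x (hx : F n x ≤ f x - ε) => ?_).trans
      (meas_ge_le_ofReal_integral_div hP (.of_forall fun _ => le_max_right _ _) hε)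
    exact le_max_of_le_left (show ε ≤ f x - F n x by linarith)
  have bound_lim :
      Tendsto (fun n => ENNReal.ofReal ((∫ x, max (f x - F n x) 0 ∂μ) / ε)) atTop (𝓝 0) := by
    simpa using ENNReal.tendsto_ofReal (h.div_const ε)
  exact tendsto_of_tendsto_of_tendsto_of_le_of_le tendsto_const_nhds bound_lim
    (fun _ => zero_le) markov

theorem eventually_forall_le_setIntegral_of_tendsto_integral_max_sub {f : S → ℝ}
    {F : ℕ → S → ℝ} (hf : Integrable f μ) (hF : ∀ n, Integrable (F n) μ)
    (h : Tendsto (fun n => ∫ x, max (f x - F n x) 0 ∂μ) atTop (𝓝 0)) {ε : ℝ} (hε : 0 < ε) :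
    ∀ᶠ K in atTop, ∀ n, -ε ≤ ∫ x in {x | F n x ≤ -K}, F n x ∂μ := by
  obtain ⟨N, hN⟩ :=
    eventually_atTop.1 (h.eventually (eventually_le_nhds (by positivity : 0 < ε / 4)))
  have tail_f : ∀ᶠ K in atTop, -(ε / 4) ≤ ∫ x in {x | -|f x| ≤ -(K / 2)}, -|f x| ∂μ :=
    (hf.abs.neg.tendsto_setIntegral_setOf_le_neg.comp
      (tendsto_id.atTop_div_const two_pos)).eventually (eventually_ge_nhds (by linarith))
  have tail_F : ∀ᶠ K in atTop, ∀ n ∈ Finset.range N, -ε ≤ ∫ x in {x | F n x ≤ -K}, F n x ∂μ :=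
    (Finset.range N).eventually_all.2 fun n _ =>
      (hF n).tendsto_setIntegral_setOf_le_neg.eventually (eventually_ge_nhds (neg_neg_of_pos hε))
  filter_upwards [tail_f, tail_F, eventually_ge_atTop 0] with K hf_K hF_K hK n
  rcases lt_or_ge n N with hn | hn
  · exact hF_K n (Finset.mem_range.2 hn)
  · linarith [le_setIntegral_setOf_le_neg hf (hF n) hK, hN n hn]

theorem tendsto_integral_max_sub_of_tendsto_measure [IsFiniteMeasure μ] {f : S → ℝ}
    {F : ℕ → S → ℝ} (hf : Integrable f μ) (hF : ∀ n, Integrable (F n) μ)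
    (h_meas : ∀ ε > 0, Tendsto (fun n => μ {x | F n x ≤ f x - ε}) atTop (𝓝 0))
    (h_tail : ∀ ε > 0, ∀ᶠ K in atTop, ∀ n, -ε ≤ ∫ x in {x | F n x ≤ -K}, F n x ∂μ) :
    Tendsto (fun n => ∫ x, max (f x - F n x) 0 ∂μ) atTop (𝓝 0) := by
  refine (tendsto_nhds_zero_iff_forall_eventually_le fun n => ?_).2 fun ε hε => ?_
  · exact integral_nonneg fun _ => le_max_right _ _
  obtain ⟨K, hK_tail, hK⟩ := ((h_tail (ε / 3) (by positivity)).and (eventually_ge_atTop 0)).exists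
  obtain ⟨δ, hδ, hδμ⟩ : ∃ δ > 0, δ * μ.real Set.univ ≤ ε / 3 := by
    refine ⟨ε / (3 * (μ.real Set.univ + 1)), by positivity, ?_⟩
    rw [div_mul_eq_mul_div, div_le_div_iff₀ (by positivity) (by positivity)]
    nlinarith
  have small_set : Tendsto (fun n => ∫ x in {x | F n x ≤ f x - δ}, (|f x| + K) ∂μ) atTop (𝓝 0) :=
    (hf.abs.add (integrable_const K)).tendsto_setIntegral_nhds_zero (h_meas δ hδ)
  filter_upwards [small_set.eventually (eventually_le_nhds (by positivity : 0 < ε / 3))] with n hn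
  linarith [integral_max_sub_le hf (hF n) hδ.le hK, hK_tail n]

theorem tendsto_integral_max_sub_iff [IsFiniteMeasure μ] {f : S → ℝ} {F : ℕ → S → ℝ}
    (hf : Integrable f μ) (hF : ∀ n, Integrable (F n) μ) :
    Tendsto (fun n => ∫ x, max (f x - F n x) 0 ∂μ) atTop (𝓝 0) ↔
      (∀ ε > 0, Tendsto (fun n => μ {x | F n x ≤ f x - ε}) atTop (𝓝 0)) ∧
        ∀ ε > 0, ∀ᶠ K in atTop, ∀ n, -ε ≤ ∫ x in {x | F n x ≤ -K}, F n x ∂μ :=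
  ⟨fun h => ⟨fun _ hε => tendsto_measure_setOf_le_sub_of_tendsto_integral_max_sub hf hF h hε,
      fun _ hε => eventually_forall_le_setIntegral_of_tendsto_integral_max_sub hf hF h hε⟩,
    fun h => tendsto_integral_max_sub_of_tendsto_measure hf hF h.1 h.2⟩

end MeasureTheory

/-- Uniform Fatou's Lemma for a fixed finite measure. -/
theorem uniform_fatou_stmt7 {S : Type*} [MeasurableSpace S]
    (μ : Measure S) [IsFiniteMeasure μ]
    (f : S → ℝ) (F : ℕ → S → ℝ)
    (hf : Integrable f μ) (hF : ∀ n, Integrable (F n) μ) :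
    (∀ ε : ℝ, 0 < ε → ∀ᶠ n in atTop,
      -ε ≤ ⨅ (A : Set S) (_ : MeasurableSet A),
        (∫ s in A, F n s ∂μ - ∫ s in A, f s ∂μ)) ↔
    ((∀ ε : ℝ, 0 < ε →
        Tendsto (fun n => μ {s | F n s ≤ f s - ε}) atTop (𝓝 0)) ∧
      (∀ ε : ℝ, 0 < ε → ∃ K₀ : ℝ, ∀ K ≥ K₀, ∀ n,
        -ε ≤ ∫ s in {x | F n x ≤ -K}, F n s ∂μ)) := by
  have hinf (n : ℕ) : ⨅ (A : Set S) (_ : MeasurableSet A),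
      (∫ s in A, F n s ∂μ - ∫ s in A, f s ∂μ) = -∫ x, max (f x - F n x) 0 ∂μ :=
    calc _ = ⨅ (A : Set S) (_ : MeasurableSet A), ∫ x in A, (F n x - f x) ∂μ :=
          iInf_congr fun A => iInf_congr fun _ =>
            (integral_sub (hF n).integrableOn hf.integrableOn).symm
      _ = _ := by
          simpa only [Pi.sub_apply, neg_sub] using
            iInf_setIntegral_eq_neg_integral_max_neg ((hF n).sub hf)
  simp_rw [hinf, neg_le_neg_iff, ← eventually_atTop]
  refine (tendsto_nhds_zero_iff_forall_eventually_le fun n => ?_).symm.trans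
    (tendsto_integral_max_sub_iff hf hF)
  exact integral_nonneg fun _ => le_max_right _ _
end
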